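/- Fix n ≥ 1, s with 0 ≤ s ≤ n and s ≡ n (mod 2), and f = (n − s)/2. For α, β ∈ S_n and an (n,n)-Brauer diagram m, let (α, β)·m denote the Brauer diagram obtained by relabeling: an edge {p_i, p_j} becomes {p_{α(i)}, p_{α(j)}}, an edge {p̄_i, p̄_j} becomes {p̄_{β(i)}, p̄_{β(j)}}, and an edge {p_i, p̄_j} becomes {p_{α(i)}, p̄_{β(j)}}. For π a permutation of {2f+1,…,n}, let d_π be the Brauer diagram with edges {p_{2i−1}, p_{2i}} and {p̄_{2i−1}, p̄_{2i}} for 1 ≤ i ≤ f, and {p_i, p̄_{π(i)}} for 2f+1 ≤ i ≤ n. Then the map (α, π, β) ↦ (α, β)·d_π is a bijection from D_{f,n} × Sym({2f+1,…,n}) × D_{f,n} onto the set of (n,n)-Brauer diagrams with exactly s vertical strands. -/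

import Mathlib

noncomputable section

open scoped BigOperators

/-- The adjacent transposition `s_{i+1}` (paper index `i+1`), i.e. the permutation of
`{1,…,n}` (modeled as `Fin n`, 0-based) swapping positions `i` and `i+1`. -/
def simpleT (n : ℕ) (i : Fin (n - 1)) : Equiv.Perm (Fin n) :=
  Equiv.swap ⟨(i : ℕ), by have := i.isLt; omega⟩ ⟨(i : ℕ) + 1, by have := i.isLt; omega⟩

/-- The permutation represented by a word in the simple transpositions. -/
def permOfWord (n : ℕ) (l : List (Fin (n - 1))) : Equiv.Perm (Fin n) :=
  (l.map (simpleT n)).prod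

/-- The number of inversions (Coxeter length) of a permutation of `Fin n`. -/
def invCount (n : ℕ) (σ : Equiv.Perm (Fin n)) : ℕ :=
  (Finset.univ.filter (fun p : Fin n × Fin n => p.1 < p.2 ∧ σ p.2 < σ p.1)).card

/-- `l` is a reduced expression for the permutation `σ`. -/
def IsReducedWord (n : ℕ) (l : List (Fin (n - 1))) (σ : Equiv.Perm (Fin n)) : Prop :=
  permOfWord n l = σ ∧ l.length = invCount n σ

/-- The set `D_{f,n}` of Enyang, written for `{1,…,n}` modeled 0-based as `Fin n`. -/
def Dfn (n f : ℕ) : Set (Equiv.Perm (Fin n)) :=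
  {π | (∀ i j : Fin n, (i : ℕ) % 2 = 1 → (j : ℕ) % 2 = 1 → i < j → (j : ℕ) < 2 * f →
          π i < π j) ∧
       (∀ i j : Fin n, (i : ℕ) % 2 = 0 → (j : ℕ) = (i : ℕ) + 1 → (j : ℕ) < 2 * f →
          π i < π j) ∧
       (∀ i j : Fin n, 2 * f ≤ (i : ℕ) → i < j → π i < π j)}


/-- An `(n,n)`-Brauer diagram:  a perfect matching of the `2n` vertices
`p_1,…,p_n` (the `inl`s) and `p̄_1,…,p̄_n` (the `inr`s), modeled as a fixed-point-free
involution. -/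
structure BrauerDiagram (n : ℕ) where
  m : Fin n ⊕ Fin n → Fin n ⊕ Fin n
  invol : Function.Involutive m
  fixfree : ∀ v, m v ≠ v

/-- The relabeling action of a pair of permutations `(α, β)` on Brauer diagrams:  the
edge `{p_i, p_j}` becomes `{p_{α(i)}, p_{α(j)}}`, the edge `{p̄_i, p̄_j}` becomes
`{p̄_{β(i)}, p̄_{β(j)}}`, and the edge `{p_i, p̄_j}` becomes `{p_{α(i)}, p̄_{β(j)}}`. -/
def BrauerDiagram.relabel {n : ℕ} (α β : Equiv.Perm (Fin n)) (D : BrauerDiagram n) :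
    BrauerDiagram n where
  m := fun v => (Equiv.sumCongr α β) (D.m ((Equiv.sumCongr α β).symm v))
  invol := by
    intro v
    simp only [Equiv.symm_apply_apply]
    rw [D.invol, Equiv.apply_symm_apply]
  fixfree := by
    intro v h
    apply D.fixfree ((Equiv.sumCongr α β).symm v)
    have := congrArg (Equiv.sumCongr α β).symm h
    simpa using this

/-- The partner of a vertex `i < 2f` within its block `{2k, 2k+1}` (0-based):
`i+1` if `i` is even, `i-1` if `i` is odd. -/
def partnerFin (n f : ℕ) (hf : 2 * f ≤ n) (i : Fin n) (h : (i : ℕ) < 2 * f) : Fin n :=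
  ⟨2 * ((i : ℕ) / 2) + (1 - (i : ℕ) % 2), by omega⟩

lemma partnerFin_lt (n f : ℕ) (hf : 2 * f ≤ n) (i : Fin n) (h : (i : ℕ) < 2 * f) :
    ((partnerFin n f hf i h : Fin n) : ℕ) < 2 * f := by
  simp only [partnerFin]; omega

lemma partnerFin_partnerFin (n f : ℕ) (hf : 2 * f ≤ n) (i : Fin n) (h : (i : ℕ) < 2 * f) :
    partnerFin n f hf (partnerFin n f hf i h) (partnerFin_lt n f hf i h) = i := by
  apply Fin.ext; simp only [partnerFin]; omega

lemma partnerFin_ne (n f : ℕ) (hf : 2 * f ≤ n) (i : Fin n) (h : (i : ℕ) < 2 * f) :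
    partnerFin n f hf i h ≠ i := by
  intro hcon
  have := congrArg (fun x : Fin n => (x : ℕ)) hcon
  simp only [partnerFin] at this
  omega

lemma perm_ge_of_fix_lt {n f : ℕ} (σ : Equiv.Perm (Fin n))
    (hσ : ∀ i : Fin n, (i : ℕ) < 2 * f → σ i = i) (i : Fin n) (hi : 2 * f ≤ (i : ℕ)) :
    2 * f ≤ ((σ i : Fin n) : ℕ) := by
  by_contra hlt
  push_neg at hlt
  have h1 : σ (σ i) = σ i := hσ (σ i) hlt
  have h2 : σ i = i := σ.injective h1
  omega

lemma perm_inv_fix_lt {n f : ℕ} (σ : Equiv.Perm (Fin n))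
    (hσ : ∀ i : Fin n, (i : ℕ) < 2 * f → σ i = i) (i : Fin n) (hi : (i : ℕ) < 2 * f) :
    σ⁻¹ i = i := by
  have := hσ i hi
  calc σ⁻¹ i = σ⁻¹ (σ i) := by rw [this]
  _ = i := by simp

/-- The underlying matching function of the Brauer diagram `d_π`. -/
def dFun (n f : ℕ) (hf : 2 * f ≤ n) (σ : Equiv.Perm (Fin n)) :
    Fin n ⊕ Fin n → Fin n ⊕ Fin n
  | .inl i => if h : (i : ℕ) < 2 * f then .inl (partnerFin n f hf i h) else .inr (σ i)
  | .inr i => if h : (i : ℕ) < 2 * f then .inr (partnerFin n f hf i h) else .inl (σ⁻¹ i)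

/-- The Brauer diagram `d_π` of Statement 14:  horizontal edges `{p_{2i-1}, p_{2i}}` and
`{p̄_{2i-1}, p̄_{2i}}` for `1 ≤ i ≤ f` and vertical edges `{p_i, p̄_{π(i)}}` for
`2f+1 ≤ i ≤ n`.  The permutation `π` of `{2f+1,…,n}` is modeled as a permutation `σ` of
`Fin n` fixing the first `2f` points. -/
def brauerD (n f : ℕ) (hf : 2 * f ≤ n) (σ : Equiv.Perm (Fin n))
    (hσ : ∀ i : Fin n, (i : ℕ) < 2 * f → σ i = i) : BrauerDiagram n where
  m := dFun n f hf σ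
  invol := by
    rintro (i | i)
    · by_cases h : (i : ℕ) < 2 * f
      · rw [show dFun n f hf σ (.inl i) = .inl (partnerFin n f hf i h) by
            simp [dFun, dif_pos h]]
        rw [show dFun n f hf σ (.inl (partnerFin n f hf i h)) =
              .inl (partnerFin n f hf _ (partnerFin_lt n f hf i h)) by
            simp [dFun, dif_pos (partnerFin_lt n f hf i h)]]
        rw [partnerFin_partnerFin]
      · rw [show dFun n f hf σ (.inl i) = .inr (σ i) by simp [dFun, dif_neg h]]
        have h2 : ¬ ((σ i : Fin n) : ℕ) < 2 * f := by
          push_neg at h ⊢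
          exact perm_ge_of_fix_lt σ hσ i h
        rw [show dFun n f hf σ (.inr (σ i)) = .inl (σ⁻¹ (σ i)) by
            simp [dFun, dif_neg h2]]
        simp
    · by_cases h : (i : ℕ) < 2 * f
      · rw [show dFun n f hf σ (.inr i) = .inr (partnerFin n f hf i h) by
            simp [dFun, dif_pos h]]
        rw [show dFun n f hf σ (.inr (partnerFin n f hf i h)) =
              .inr (partnerFin n f hf _ (partnerFin_lt n f hf i h)) by
            simp [dFun, dif_pos (partnerFin_lt n f hf i h)]]
        rw [partnerFin_partnerFin]
      · rw [show dFun n f hf σ (.inr i) = .inl (σ⁻¹ i) by simp [dFun, dif_neg h]]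
        have h2 : ¬ ((σ⁻¹ i : Fin n) : ℕ) < 2 * f := by
          push_neg at h ⊢
          exact perm_ge_of_fix_lt σ⁻¹ (fun j hj => perm_inv_fix_lt σ hσ j hj) i h
        rw [show dFun n f hf σ (.inl (σ⁻¹ i)) = .inr (σ (σ⁻¹ i)) by
            simp [dFun, dif_neg h2]; exact Nat.le_of_not_lt h2]
        simp
  fixfree := by
    rintro (i | i)
    · by_cases h : (i : ℕ) < 2 * f
      · rw [show dFun n f hf σ (.inl i) = .inl (partnerFin n f hf i h) by
            simp [dFun, dif_pos h]]
        simpa using partnerFin_ne n f hf i h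
      · rw [show dFun n f hf σ (.inl i) = .inr (σ i) by simp [dFun, dif_neg h]]
        simp
    · by_cases h : (i : ℕ) < 2 * f
      · rw [show dFun n f hf σ (.inr i) = .inr (partnerFin n f hf i h) by
            simp [dFun, dif_pos h]]
        simpa using partnerFin_ne n f hf i h
      · rw [show dFun n f hf σ (.inr i) = .inl (σ⁻¹ i) by simp [dFun, dif_neg h]]
        simp

/-- The number of vertical strands of a Brauer diagram. -/
def verticalCount {n : ℕ} (D : BrauerDiagram n) : ℕ :=
  (Finset.univ.filter (fun i : Fin n => ∃ j : Fin n, D.m (.inl i) = .inr j)).card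

namespace Stmt14

open Finset

lemma BrauerDiagram.ext' {n : ℕ} {D D' : BrauerDiagram n} (h : D.m = D'.m) : D = D' := by
  cases D; cases D'; simpa using h

variable {n f : ℕ}

/-- forget which side a vertex is on -/
def unify : Fin n ⊕ Fin n → Fin n
  | .inl i => i
  | .inr i => i

/-- top vertices having horizontal edges -/
def Htop (D : BrauerDiagram n) : Finset (Fin n) :=
  univ.filter fun i => (D.m (.inl i)).isLeft

/-- the other endpoint of the edge at top vertex `i` -/
def topTo (D : BrauerDiagram n) (i : Fin n) : Fin n := unify (D.m (.inl i))

lemma mem_Htop {D : BrauerDiagram n} {i : Fin n} :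
    i ∈ Htop D ↔ (D.m (.inl i)).isLeft := by simp [Htop]

lemma m_inl_of_mem {D : BrauerDiagram n} {i : Fin n} (h : i ∈ Htop D) :
    D.m (.inl i) = .inl (topTo D i) := by
  rw [mem_Htop] at h
  rcases hm : D.m (.inl i) with j | j
  · simp [topTo, hm, unify]
  · rw [hm] at h; simp at h

lemma m_inl_of_not_mem {D : BrauerDiagram n} {i : Fin n} (h : i ∉ Htop D) :
    D.m (.inl i) = .inr (topTo D i) := by
  rw [mem_Htop] at h
  rcases hm : D.m (.inl i) with j | j
  · rw [hm] at h; simp at h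
  · simp [topTo, hm, unify]

lemma topTo_mem {D : BrauerDiagram n} {i : Fin n} (h : i ∈ Htop D) :
    topTo D i ∈ Htop D := by
  rw [mem_Htop]
  have := D.invol (.inl i)
  rw [m_inl_of_mem h] at this
  rw [this]; rfl

lemma topTo_topTo {D : BrauerDiagram n} {i : Fin n} (h : i ∈ Htop D) :
    topTo D (topTo D i) = i := by
  have h2 := D.invol (.inl i)
  rw [m_inl_of_mem h] at h2
  show unify (D.m (.inl (topTo D i))) = i
  rw [h2]; rfl

lemma topTo_ne {D : BrauerDiagram n} {i : Fin n} (h : i ∈ Htop D) :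
    topTo D i ≠ i := by
  intro hc
  exact D.fixfree (.inl i) (by rw [m_inl_of_mem h, hc])

/-- the flipped (upside-down) diagram -/
def flip (D : BrauerDiagram n) : BrauerDiagram n where
  m := fun v => (D.m v.swap).swap
  invol := by intro v; simp [D.invol v.swap]
  fixfree := by
    intro v hc
    apply D.fixfree v.swap
    have := congrArg Sum.swap hc
    simpa using this

lemma flip_m (D : BrauerDiagram n) (v : Fin n ⊕ Fin n) :
    (flip D).m v = (D.m v.swap).swap := rfl

lemma m_inr_eq (D : BrauerDiagram n) (i : Fin n) :
    D.m (.inr i) = ((flip D).m (.inl i)).swap := by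
  simp [flip_m]

lemma verticalCount_eq (D : BrauerDiagram n) :
    verticalCount D = ((Htop D)ᶜ).card := by
  unfold verticalCount
  congr 1
  ext i
  simp only [mem_filter, mem_univ, true_and, mem_compl, mem_Htop]
  rcases hm : D.m (.inl i) with j | j <;> simp

lemma card_Htop_flip (D : BrauerDiagram n) :
    (Htop (flip D)).card = (Htop D).card := by
  have hc : ((Htop D)ᶜ).card = ((Htop (flip D))ᶜ).card := by
    apply Finset.card_nbij (i := topTo D)
    · intro a ha
      simp only [coe_compl, Set.mem_compl_iff, mem_coe, mem_compl] at ha ⊢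
      rw [mem_Htop, flip_m]
      have h1 := m_inl_of_not_mem ha
      have h2 := D.invol (.inl a)
      rw [h1] at h2
      simp only [Sum.swap_inl]
      rw [h2]
      simp
    · intro a ha b hb hab
      simp only [coe_compl, Set.mem_compl_iff, mem_coe] at ha hb
      have h1 := m_inl_of_not_mem ha
      have h2 := m_inl_of_not_mem hb
      have : D.m (.inl a) = D.m (.inl b) := by rw [h1, h2, hab]
      have := D.invol.injective this
      simpa using this
    · intro y hy
      simp only [coe_compl, Set.mem_compl_iff, mem_coe, Set.mem_image] at hy ⊢
      rw [mem_Htop, flip_m] at hy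
      simp only [Sum.swap_inl] at hy
      rcases hm : D.m (.inr y) with x | x
      · refine ⟨x, ?_, ?_⟩
        · rw [mem_Htop]
          have h2 := D.invol (.inr y)
          rw [hm] at h2
          rw [h2]; simp
        · have h2 := D.invol (.inr y)
          rw [hm] at h2
          simp [topTo, h2, unify]
      · rw [hm] at hy
        simp at hy
  have h1 := Finset.card_compl (Htop D)
  have h2 := Finset.card_compl (Htop (flip D))
  have h3 : (Htop D).card ≤ Fintype.card (Fin n) := Finset.card_le_univ _
  have h4 : (Htop (flip D)).card ≤ Fintype.card (Fin n) := Finset.card_le_univ _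
  omega

/-- vertices that are the larger endpoint of a top horizontal edge -/
def Btop (D : BrauerDiagram n) : Finset (Fin n) :=
  (Htop D).filter fun i => topTo D i < i

lemma two_mul_card_Btop (D : BrauerDiagram n) :
    2 * (Btop D).card = (Htop D).card := by
  have hsplit := Finset.card_filter_add_card_filter_not
    (s := Htop D) (p := fun i => topTo D i < i)
  have hA : ((Htop D).filter fun i => ¬ topTo D i < i).card = (Btop D).card := by
    symm
    apply Finset.card_nbij (i := topTo D)
    · intro a ha
      simp only [mem_coe, Btop, mem_filter] at ha
      rw [mem_coe, mem_filter]
      refine ⟨topTo_mem ha.1, ?_⟩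
      rw [topTo_topTo ha.1]
      exact not_lt.2 (le_of_lt ha.2)
    · intro a ha b hb hab
      simp only [mem_coe, Btop, mem_filter] at ha hb
      have := congrArg (topTo D) hab
      rwa [topTo_topTo ha.1, topTo_topTo hb.1] at this
    · intro y hy
      simp only [mem_coe, mem_filter] at hy
      simp only [Set.mem_image, mem_coe]
      refine ⟨topTo D y, ?_, topTo_topTo hy.1⟩
      rw [Btop, mem_filter]
      refine ⟨topTo_mem hy.1, ?_⟩
      rw [topTo_topTo hy.1]
      rcases lt_or_eq_of_le (not_lt.1 hy.2) with h | h
      · exact h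
      · exact absurd h.symm (topTo_ne hy.1)
  unfold Btop at *
  omega
lemma card_Btop (D : BrauerDiagram n) (hH : (Htop D).card = 2 * f) :
    (Btop D).card = f := by
  have := two_mul_card_Btop D; omega

lemma card_Htop_compl (D : BrauerDiagram n) (hH : (Htop D).card = 2 * f) :
    ((Htop D)ᶜ).card = n - 2 * f := by
  rw [Finset.card_compl, hH, Fintype.card_fin]

/-- the canonical permutation extracted from the top rows of a diagram -/
def aF (hf : 2 * f ≤ n) (D : BrauerDiagram n) (hH : (Htop D).card = 2 * f) :
    Fin n → Fin n := fun i =>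
  if h : (i : ℕ) < 2 * f then
    if (i : ℕ) % 2 = 1 then
      (Btop D).orderEmbOfFin (card_Btop D hH) ⟨(i : ℕ) / 2, by omega⟩
    else topTo D ((Btop D).orderEmbOfFin (card_Btop D hH) ⟨(i : ℕ) / 2, by omega⟩)
  else
    ((Htop D)ᶜ).orderEmbOfFin (card_Htop_compl D hH)
      ⟨(i : ℕ) - 2 * f, by have := i.isLt; omega⟩

variable {hf : 2 * f ≤ n} {D : BrauerDiagram n} {hH : (Htop D).card = 2 * f}

lemma aF_odd_mem {i : Fin n} (h1 : (i : ℕ) < 2 * f) (h2 : (i : ℕ) % 2 = 1) :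
    aF hf D hH i ∈ Btop D := by
  unfold aF
  rw [dif_pos h1, if_pos h2]
  exact Finset.orderEmbOfFin_mem _ _ _

lemma aF_even_eq {i j : Fin n} (h1 : (i : ℕ) < 2 * f) (h2 : (i : ℕ) % 2 = 0)
    (hj : (j : ℕ) = (i : ℕ) + 1) :
    aF hf D hH i = topTo D (aF hf D hH j) := by
  have hj1 : (j : ℕ) < 2 * f := by omega
  unfold aF
  rw [dif_pos h1, if_neg (by omega), dif_pos hj1, if_pos (by omega)]
  exact congrArg (fun k => topTo D ((Btop D).orderEmbOfFin (card_Btop D hH) k))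
    (Fin.ext (show (i : ℕ) / 2 = (j : ℕ) / 2 by omega))

lemma aF_odd_inj {i j : Fin n} (hi1 : (i : ℕ) < 2 * f) (hi2 : (i : ℕ) % 2 = 1)
    (hj1 : (j : ℕ) < 2 * f) (hj2 : (j : ℕ) % 2 = 1)
    (h : aF hf D hH i = aF hf D hH j) : i = j := by
  unfold aF at h
  rw [dif_pos hi1, if_pos hi2, dif_pos hj1, if_pos hj2] at h
  have := (Finset.orderEmbOfFin (Btop D) (card_Btop D hH)).injective h
  have := congrArg Fin.val this
  simp only [] at this
  exact Fin.ext (by omega)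

lemma aF_odd_gt {i : Fin n} (h1 : (i : ℕ) < 2 * f) (h2 : (i : ℕ) % 2 = 1) :
    topTo D (aF hf D hH i) < aF hf D hH i := by
  have := aF_odd_mem (hf := hf) (hH := hH) h1 h2
  rw [Btop, mem_filter] at this
  exact this.2

lemma aF_odd_mem_Htop {i : Fin n} (h1 : (i : ℕ) < 2 * f) (h2 : (i : ℕ) % 2 = 1) :
    aF hf D hH i ∈ Htop D :=
  Finset.filter_subset _ _ (aF_odd_mem h1 h2)

lemma aF_succ {i : Fin n} (hfn : 2 * f ≤ n) (h1 : (i : ℕ) < 2 * f) (h2 : (i : ℕ) % 2 = 0) :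
    ∃ j : Fin n, (j : ℕ) = (i : ℕ) + 1 ∧ (j : ℕ) < 2 * f ∧ (j : ℕ) % 2 = 1 := by
  refine ⟨⟨(i : ℕ) + 1, by omega⟩, rfl, by simp; omega, by simp; omega⟩

lemma aF_mem_Htop {i : Fin n} (h1 : (i : ℕ) < 2 * f) :
    aF hf D hH i ∈ Htop D := by
  by_cases h2 : (i : ℕ) % 2 = 1
  · exact aF_odd_mem_Htop h1 h2
  · obtain ⟨j, hj1, hj2, hj3⟩ := aF_succ hf h1 (by omega)
    rw [aF_even_eq h1 (by omega) hj1]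
    exact topTo_mem (aF_odd_mem_Htop hj2 hj3)

lemma aF_even_lt {i : Fin n} (h1 : (i : ℕ) < 2 * f) (h2 : (i : ℕ) % 2 = 0) :
    aF hf D hH i < topTo D (aF hf D hH i) := by
  obtain ⟨j, hj1, hj2, hj3⟩ := aF_succ hf h1 h2
  rw [aF_even_eq h1 h2 hj1, topTo_topTo (aF_odd_mem_Htop hj2 hj3)]
  exact aF_odd_gt hj2 hj3

lemma aF_tail_not_mem {i : Fin n} (h : ¬ (i : ℕ) < 2 * f) :
    aF hf D hH i ∉ Htop D := by
  unfold aF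
  rw [dif_neg h]
  have := Finset.orderEmbOfFin_mem ((Htop D)ᶜ) (card_Htop_compl D hH)
    ⟨(i : ℕ) - 2 * f, by have := i.isLt; omega⟩
  rwa [mem_compl] at this

lemma aF_injective : Function.Injective (aF hf D hH) := by
  intro i j hij
  by_cases hi : (i : ℕ) < 2 * f <;> by_cases hj : (j : ℕ) < 2 * f
  · by_cases pi : (i : ℕ) % 2 = 1 <;> by_cases pj : (j : ℕ) % 2 = 1
    · exact aF_odd_inj hi pi hj pj hij
    · have h1 := aF_odd_gt (hf := hf) (hH := hH) hi pi
      have h2 := aF_even_lt (hf := hf) (hH := hH) hj (by omega)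
      rw [hij] at h1
      exact absurd (h1.trans h2) (lt_irrefl _)
    · have h1 := aF_odd_gt (hf := hf) (hH := hH) hj pj
      have h2 := aF_even_lt (hf := hf) (hH := hH) hi (by omega)
      rw [hij] at h2
      exact absurd (h1.trans h2) (lt_irrefl _)
    · obtain ⟨i', hi1, hi2, hi3⟩ := aF_succ hf hi (by omega)
      obtain ⟨j', hj1, hj2, hj3⟩ := aF_succ hf hj (by omega)
      rw [aF_even_eq hi (by omega) hi1, aF_even_eq hj (by omega) hj1] at hij
      have := congrArg (topTo D) hij
      rw [topTo_topTo (aF_odd_mem_Htop hi2 hi3),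
        topTo_topTo (aF_odd_mem_Htop hj2 hj3)] at this
      have := aF_odd_inj hi2 hi3 hj2 hj3 this
      have := congrArg Fin.val this
      exact Fin.ext (by omega)
  · exact absurd (hij ▸ aF_mem_Htop hi) (aF_tail_not_mem hj)
  · exact absurd (hij ▸ aF_tail_not_mem hi) (fun h => h (aF_mem_Htop hj))
  · unfold aF at hij
    rw [dif_neg hi, dif_neg hj] at hij
    have := (Finset.orderEmbOfFin ((Htop D)ᶜ) (card_Htop_compl D hH)).injective hij
    have := congrArg Fin.val this
    simp only [] at this
    exact Fin.ext (by omega)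

lemma aF_tail_lt {i j : Fin n} (h1 : 2 * f ≤ (i : ℕ)) (h2 : i < j) :
    aF hf D hH i < aF hf D hH j := by
  have hj : 2 * f ≤ (j : ℕ) := le_trans h1 (le_of_lt h2)
  unfold aF
  rw [dif_neg (by omega), dif_neg (by omega)]
  exact (Finset.orderEmbOfFin ((Htop D)ᶜ) (card_Htop_compl D hH)).strictMono
    (by rw [Fin.mk_lt_mk]; have := Fin.lt_def.1 h2; omega)

lemma aF_odd_lt {i j : Fin n} (hi : (i : ℕ) % 2 = 1) (hj : (j : ℕ) % 2 = 1)
    (hij : i < j) (hj2 : (j : ℕ) < 2 * f) :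
    aF hf D hH i < aF hf D hH j := by
  have hi2 : (i : ℕ) < 2 * f := lt_trans (Fin.lt_def.1 hij) hj2
  unfold aF
  rw [dif_pos hi2, if_pos hi, dif_pos hj2, if_pos hj]
  exact (Finset.orderEmbOfFin (Btop D) (card_Btop D hH)).strictMono
    (by rw [Fin.mk_lt_mk]; have := Fin.lt_def.1 hij; omega)

/-- the canonical permutation, as an `Equiv.Perm` -/
def aPerm (hf : 2 * f ≤ n) (D : BrauerDiagram n) (hH : (Htop D).card = 2 * f) :
    Equiv.Perm (Fin n) :=
  Equiv.ofBijective (aF hf D hH) (Finite.injective_iff_bijective.mp aF_injective)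

lemma aPerm_apply (i : Fin n) : aPerm hf D hH i = aF hf D hH i := rfl

lemma aPerm_mem_Dfn : aPerm hf D hH ∈ Dfn n f := by
  refine ⟨fun i j hi hj hij hj2 => aF_odd_lt (hf := hf) (D := D) (hH := hH) hi hj hij hj2,
    fun i j hi hj hj2 => ?_, fun i j hi hij => aF_tail_lt (hf := hf) (D := D) (hH := hH) hi hij⟩
  rw [aPerm_apply, aPerm_apply, aF_even_eq (by omega) hi hj]
  exact aF_odd_gt (by omega) (by omega)

lemma aF_pair {i : Fin n} (h1 : (i : ℕ) < 2 * f) :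
    D.m (.inl (aF hf D hH i)) = .inl (aF hf D hH (partnerFin n f hf i h1)) := by
  by_cases h2 : (i : ℕ) % 2 = 1
  · have hmem := aF_odd_mem_Htop (hf := hf) (hH := hH) h1 h2
    rw [m_inl_of_mem hmem]
    congr 1
    have hp1 : ((partnerFin n f hf i h1 : Fin n) : ℕ) = (i : ℕ) - 1 := by
      simp only [partnerFin]; omega
    rw [aF_even_eq (i := partnerFin n f hf i h1) (j := i) (by omega) (by omega) (by omega)]
  · have hp1 : ((partnerFin n f hf i h1 : Fin n) : ℕ) = (i : ℕ) + 1 := by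
      simp only [partnerFin]; omega
    have hp2 := partnerFin_lt n f hf i h1
    rw [aF_even_eq h1 (by omega) hp1]
    have hmem : aF hf D hH (partnerFin n f hf i h1) ∈ Htop D :=
      aF_odd_mem_Htop hp2 (by omega)
    rw [m_inl_of_mem (topTo_mem hmem), topTo_topTo hmem]
lemma eq_aF (hf : 2 * f ≤ n) (D : BrauerDiagram n) (hH : (Htop D).card = 2 * f)
    (α : Equiv.Perm (Fin n)) (hα : α ∈ Dfn n f)
    (h1 : ∀ j k : Fin n, (j : ℕ) % 2 = 1 → (j : ℕ) < 2 * f → (k : ℕ) + 1 = (j : ℕ) →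
      α j ∈ Htop D ∧ topTo D (α j) = α k)
    (h2 : ∀ j : Fin n, ¬ (j : ℕ) < 2 * f → α j ∉ Htop D) :
    ∀ j, α j = aF hf D hH j := by
  obtain ⟨hd1, hd2, hd3⟩ := hα
  have hodd : ∀ k : Fin f, (fun k : Fin f => α ⟨2 * (k : ℕ) + 1, by omega⟩) k ∈ Btop D := by
    intro k
    obtain ⟨hm, ht⟩ := h1 ⟨2 * (k : ℕ) + 1, by omega⟩ ⟨2 * (k : ℕ), by omega⟩
      (by simp only []; omega) (by simp only []; omega) (by simp only [])
    rw [Btop, mem_filter]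
    refine ⟨hm, ?_⟩
    rw [ht]
    exact hd2 ⟨2 * (k : ℕ), by omega⟩ ⟨2 * (k : ℕ) + 1, by omega⟩ (by simp only []; omega)
      (by simp only []) (by simp only []; omega)
  have hmono : StrictMono (fun k : Fin f => α ⟨2 * (k : ℕ) + 1, by omega⟩) := by
    intro k k' hkk
    exact hd1 _ _ (by simp only []; omega) (by simp only []; omega)
      (by rw [Fin.mk_lt_mk]; have := Fin.lt_def.1 hkk; omega) (by simp only []; omega)
  have hb := Finset.orderEmbOfFin_unique (card_Btop D hH) hodd hmono
  have htm : ∀ k : Fin (n - 2 * f),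
      (fun k : Fin (n - 2 * f) => α ⟨2 * f + (k : ℕ), by have := k.isLt; omega⟩) k
        ∈ (Htop D)ᶜ := by
    intro k
    rw [mem_compl]
    exact h2 _ (by simp only []; omega)
  have htmono : StrictMono (fun k : Fin (n - 2 * f) =>
      α ⟨2 * f + (k : ℕ), by have := k.isLt; omega⟩) := by
    intro k k' hkk
    exact hd3 _ _ (by simp only []; omega)
      (by rw [Fin.mk_lt_mk]; have := Fin.lt_def.1 hkk; omega)
  have hc := Finset.orderEmbOfFin_unique (card_Htop_compl D hH) htm htmono
  intro j
  by_cases hj : (j : ℕ) < 2 * f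
  · by_cases hp : (j : ℕ) % 2 = 1
    · have hje : j = ⟨2 * ((j : ℕ) / 2) + 1, by omega⟩ := Fin.ext (by simp only []; omega)
      have hbk := congrFun hb ⟨(j : ℕ) / 2, by omega⟩
      simp only [] at hbk
      unfold aF
      rw [dif_pos hj, if_pos hp]
      conv_lhs => rw [hje]
      exact hbk
    · obtain ⟨hm, ht⟩ := h1 ⟨(j : ℕ) + 1, by omega⟩ j (by simp only []; omega)
        (by simp only []; omega) (by simp only [])
      rw [← ht]
      have hα1 : α (⟨(j : ℕ) + 1, by omega⟩ : Fin n) =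
          (Btop D).orderEmbOfFin (card_Btop D hH) ⟨(j : ℕ) / 2, by omega⟩ := by
        have hje : (⟨(j : ℕ) + 1, by omega⟩ : Fin n) = ⟨2 * ((j : ℕ) / 2) + 1, by omega⟩ :=
          Fin.ext (by simp only []; omega)
        rw [hje]
        exact congrFun hb ⟨(j : ℕ) / 2, by omega⟩
      rw [hα1]
      unfold aF
      rw [dif_pos hj, if_neg (by omega)]
  · have hje : j = ⟨2 * f + ((j : ℕ) - 2 * f), by have := j.isLt; omega⟩ :=
      Fin.ext (by simp only []; omega)
    have hck := congrFun hc ⟨(j : ℕ) - 2 * f, by have := j.isLt; omega⟩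
    simp only [] at hck
    unfold aF
    rw [dif_neg hj]
    conv_lhs => rw [hje]
    exact hck

section Forward

variable (hf : 2 * f ≤ n) (α β σ : Equiv.Perm (Fin n))
  (hσ : ∀ i : Fin n, (i : ℕ) < 2 * f → σ i = i)

lemma relabel_brauerD_inl (j : Fin n) :
    (BrauerDiagram.relabel α β (brauerD n f hf σ hσ)).m (.inl (α j)) =
      if h : (j : ℕ) < 2 * f then .inl (α (partnerFin n f hf j h)) else .inr (β (σ j)) := by
  show (Equiv.sumCongr α β) (dFun n f hf σ ((Equiv.sumCongr α β).symm (.inl (α j)))) = _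
  have h1 : (Equiv.sumCongr α β).symm (.inl (α j)) = .inl j := by simp
  rw [h1]
  by_cases h : (j : ℕ) < 2 * f
  · rw [show dFun n f hf σ (.inl j) = .inl (partnerFin n f hf j h) by simp [dFun, dif_pos h]]
    simp [dif_pos h]
  · rw [show dFun n f hf σ (.inl j) = .inr (σ j) by simp [dFun, dif_neg h]]
    simp [dif_neg h]

lemma relabel_brauerD_inr (j : Fin n) :
    (BrauerDiagram.relabel α β (brauerD n f hf σ hσ)).m (.inr (β j)) =
      if h : (j : ℕ) < 2 * f then .inr (β (partnerFin n f hf j h)) else .inl (α (σ⁻¹ j)) := by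
  show (Equiv.sumCongr α β) (dFun n f hf σ ((Equiv.sumCongr α β).symm (.inr (β j)))) = _
  have h1 : (Equiv.sumCongr α β).symm (.inr (β j)) = .inr j := by simp
  rw [h1]
  by_cases h : (j : ℕ) < 2 * f
  · rw [show dFun n f hf σ (.inr j) = .inr (partnerFin n f hf j h) by simp [dFun, dif_pos h]]
    simp [dif_pos h]
  · rw [show dFun n f hf σ (.inr j) = .inl (σ⁻¹ j) by simp [dFun, dif_neg h]]
    simp [dif_neg h]

lemma mem_Htop_relabel (i : Fin n) :
    i ∈ Htop (BrauerDiagram.relabel α β (brauerD n f hf σ hσ)) ↔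
      ((α.symm i : Fin n) : ℕ) < 2 * f := by
  rw [mem_Htop]
  have := relabel_brauerD_inl hf α β σ hσ (α.symm i)
  rw [Equiv.apply_symm_apply] at this
  rw [this]
  by_cases h : ((α.symm i : Fin n) : ℕ) < 2 * f <;> simp [h]

lemma card_filter_lt_fin (m : ℕ) (h : m ≤ n) :
    (univ.filter fun j : Fin n => (j : ℕ) < m).card = m := by
  have heq : (univ.filter fun j : Fin n => (j : ℕ) < m) =
      (Finset.range m).attachFin (fun a ha => lt_of_lt_of_le (Finset.mem_range.1 ha) h) := by
    ext i
    simp [Finset.mem_attachFin]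
  rw [heq, Finset.card_attachFin, Finset.card_range]

lemma card_Htop_relabel :
    (Htop (BrauerDiagram.relabel α β (brauerD n f hf σ hσ))).card = 2 * f := by
  have heq : Htop (BrauerDiagram.relabel α β (brauerD n f hf σ hσ)) =
      Finset.map ⟨α, α.injective⟩ (univ.filter fun j : Fin n => (j : ℕ) < 2 * f) := by
    ext i
    rw [mem_Htop_relabel hf α β σ hσ i]
    simp only [Finset.mem_map, mem_filter, mem_univ, true_and, Function.Embedding.coeFn_mk]
    constructor
    · intro h; exact ⟨α.symm i, h, by simp⟩
    · rintro ⟨j, hj, rfl⟩; simpa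
  rw [heq, Finset.card_map, card_filter_lt_fin (2 * f) hf]

lemma verticalCount_relabel :
    verticalCount (BrauerDiagram.relabel α β (brauerD n f hf σ hσ)) = n - 2 * f := by
  rw [verticalCount_eq, Finset.card_compl, card_Htop_relabel hf α β σ hσ, Fintype.card_fin]

end Forward
lemma hH_flip (D : BrauerDiagram n) (hH : (Htop D).card = 2 * f) :
    (Htop (flip D)).card = 2 * f := by rw [card_Htop_flip]; exact hH

lemma topTo_not_mem_flip {D : BrauerDiagram n} {x : Fin n} (hx : x ∉ Htop D) :
    topTo D x ∉ Htop (flip D) := by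
  have h1 := m_inl_of_not_mem hx
  have h2 := D.invol (.inl x)
  rw [h1] at h2
  rw [mem_Htop, flip_m]
  simp only [Sum.swap_inl]
  rw [h2]
  simp

lemma aPerm_symm_not_mem {hf : 2 * f ≤ n} {D : BrauerDiagram n}
    {hH : (Htop D).card = 2 * f} {y : Fin n} (hy : y ∉ Htop D) :
    2 * f ≤ (((aPerm hf D hH).symm y : Fin n) : ℕ) := by
  by_contra h
  push_neg at h
  have h2 := aF_mem_Htop (hf := hf) (D := D) (hH := hH) (i := (aPerm hf D hH).symm y) h
  rw [show aF hf D hH ((aPerm hf D hH).symm y) = y from (aPerm hf D hH).apply_symm_apply y]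
    at h2
  exact hy h2

lemma topTo_inj_not_mem {D : BrauerDiagram n} {x x' : Fin n} (hx : x ∉ Htop D)
    (hx' : x' ∉ Htop D) (h : topTo D x = topTo D x') : x = x' := by
  have h1 := m_inl_of_not_mem hx
  have h2 := m_inl_of_not_mem hx'
  have h3 : D.m (.inl x) = D.m (.inl x') := by rw [h1, h2, h]
  simpa using D.invol.injective h3

/-- the middle permutation extracted from a diagram -/
def sF (hf : 2 * f ≤ n) (D : BrauerDiagram n) (hH : (Htop D).card = 2 * f) :
    Fin n → Fin n := fun i =>
  if (i : ℕ) < 2 * f then i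
  else (aPerm hf (flip D) (hH_flip D hH)).symm (topTo D (aF hf D hH i))

lemma sF_injective {hf : 2 * f ≤ n} {D : BrauerDiagram n} {hH : (Htop D).card = 2 * f} :
    Function.Injective (sF hf D hH) := by
  have tail_ge : ∀ i : Fin n, ¬ (i : ℕ) < 2 * f → 2 * f ≤ ((sF hf D hH i : Fin n) : ℕ) := by
    intro i hi
    unfold sF
    rw [if_neg hi]
    exact aPerm_symm_not_mem (topTo_not_mem_flip (aF_tail_not_mem hi))
  intro i j h
  by_cases hi : (i : ℕ) < 2 * f <;> by_cases hj : (j : ℕ) < 2 * f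
  · unfold sF at h; rwa [if_pos hi, if_pos hj] at h
  · have := tail_ge j hj
    rw [← h] at this
    unfold sF at this
    rw [if_pos hi] at this
    omega
  · have := tail_ge i hi
    rw [h] at this
    unfold sF at this
    rw [if_pos hj] at this
    omega
  · unfold sF at h
    rw [if_neg hi, if_neg hj] at h
    have h2 := (aPerm hf (flip D) (hH_flip D hH)).symm.injective h
    have h3 := topTo_inj_not_mem (aF_tail_not_mem hi) (aF_tail_not_mem hj) h2
    exact aF_injective h3

/-- the middle permutation, as an `Equiv.Perm` -/
def sPerm (hf : 2 * f ≤ n) (D : BrauerDiagram n) (hH : (Htop D).card = 2 * f) :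
    Equiv.Perm (Fin n) :=
  Equiv.ofBijective (sF hf D hH) (Finite.injective_iff_bijective.mp sF_injective)

lemma sPerm_fix (hf : 2 * f ≤ n) (D : BrauerDiagram n) (hH : (Htop D).card = 2 * f) :
    ∀ i : Fin n, (i : ℕ) < 2 * f → sPerm hf D hH i = i := by
  intro i h
  show sF hf D hH i = i
  unfold sF
  rw [if_pos h]

lemma sPerm_tail {hf : 2 * f ≤ n} {D : BrauerDiagram n} {hH : (Htop D).card = 2 * f}
    {i : Fin n} (h : ¬ (i : ℕ) < 2 * f) :
    aPerm hf (flip D) (hH_flip D hH) (sPerm hf D hH i) = topTo D (aF hf D hH i) := by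
  show aPerm hf (flip D) (hH_flip D hH) (sF hf D hH i) = _
  unfold sF
  rw [if_neg h]
  exact Equiv.apply_symm_apply _ _

lemma surj_eq (hf : 2 * f ≤ n) (D : BrauerDiagram n) (hH : (Htop D).card = 2 * f) :
    BrauerDiagram.relabel (aPerm hf D hH) (aPerm hf (flip D) (hH_flip D hH))
      (brauerD n f hf (sPerm hf D hH) (sPerm_fix hf D hH)) = D := by
  set α := aPerm hf D hH with hα
  set β := aPerm hf (flip D) (hH_flip D hH) with hβ
  set σ := sPerm hf D hH with hσ
  have mainl : ∀ j : Fin n,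
      (BrauerDiagram.relabel α β (brauerD n f hf σ (sPerm_fix hf D hH))).m (.inl (α j)) =
        D.m (.inl (α j)) := by
    intro j
    rw [relabel_brauerD_inl hf α β σ (sPerm_fix hf D hH) j]
    by_cases h : (j : ℕ) < 2 * f
    · rw [dif_pos h]
      exact (aF_pair (hf := hf) (D := D) (hH := hH) h).symm
    · rw [dif_neg h]
      have h1 : β (σ j) = topTo D (aF hf D hH j) := sPerm_tail h
      rw [show D.m (.inl (α j)) = .inr (topTo D (aF hf D hH j)) from
        m_inl_of_not_mem (aF_tail_not_mem (hf := hf) (D := D) (hH := hH) h), h1]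
  have mainr : ∀ j : Fin n,
      (BrauerDiagram.relabel α β (brauerD n f hf σ (sPerm_fix hf D hH))).m (.inr (β j)) =
        D.m (.inr (β j)) := by
    intro j
    rw [relabel_brauerD_inr hf α β σ (sPerm_fix hf D hH) j]
    by_cases h : (j : ℕ) < 2 * f
    · rw [dif_pos h]
      have hp := aF_pair (hf := hf) (D := flip D) (hH := hH_flip D hH) h
      have h2 : D.m (.inr (β j)) = .inr (β (partnerFin n f hf j h)) := by
        rw [m_inr_eq]
        rw [show (flip D).m (.inl (β j)) = .inl (β (partnerFin n f hf j h)) from hp]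
        rfl
      rw [h2]
    · rw [dif_neg h]
      have hβn : β j ∉ Htop (flip D) :=
        aF_tail_not_mem (hf := hf) (D := flip D) (hH := hH_flip D hH) h
      have hm := m_inl_of_not_mem hβn
      have hDm : D.m (.inr (β j)) = .inl (topTo (flip D) (β j)) := by
        rw [m_inr_eq, hm]
        rfl
      set y := topTo (flip D) (β j) with hy
      have hinvy : D.m (.inl y) = .inr (β j) := by
        have h2 := D.invol (.inr (β j))
        rw [hDm] at h2
        exact h2
      have hynot : y ∉ Htop D := by
        rw [mem_Htop, hinvy]
        simp
      have ht : 2 * f ≤ ((α.symm y : Fin n) : ℕ) := aPerm_symm_not_mem hynot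
      have hst : σ (α.symm y) = j := by
        have h2 := sPerm_tail (hf := hf) (D := D) (hH := hH) (i := α.symm y) (by omega)
        have h3 : aF hf D hH (α.symm y) = y := α.apply_symm_apply y
        rw [h3] at h2
        have h4 : topTo D y = β j := by
          show unify (D.m (.inl y)) = β j
          rw [hinvy]
          rfl
        rw [h4] at h2
        exact β.injective h2
      have hinv : σ⁻¹ j = α.symm y := by
        rw [← hst]
        simp
      rw [hinv, hDm, Equiv.apply_symm_apply]
  apply BrauerDiagram.ext'
  funext v
  cases v with
  | inl i =>
    have h2 := mainl (α.symm i)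
    rwa [Equiv.apply_symm_apply] at h2
  | inr i =>
    have h2 := mainr (β.symm i)
    rwa [Equiv.apply_symm_apply] at h2

end Stmt14

/-- The map `(α, π, β) ↦ (α, β)·d_π` is a bijection from
`D_{f,n} × Sym({2f+1,…,n}) × D_{f,n}` onto the set of `(n,n)`-Brauer diagrams with
exactly `s = n - 2f` vertical strands. -/
theorem brauer_diagram_factorization (n f : ℕ) (hn : 1 ≤ n) (hf : 2 * f ≤ n) :
    Set.BijOn
      (fun p : Dfn n f ×
          {σ : Equiv.Perm (Fin n) // ∀ i : Fin n, (i : ℕ) < 2 * f → σ i = i} ×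
          Dfn n f =>
        BrauerDiagram.relabel (p.1 : Equiv.Perm (Fin n)) (p.2.2 : Equiv.Perm (Fin n))
          (brauerD n f hf (p.2.1 : Equiv.Perm (Fin n)) p.2.1.2))
      Set.univ
      {D : BrauerDiagram n | verticalCount D = n - 2 * f} := by
  refine ⟨?_, ?_, ?_⟩
  · -- MapsTo
    rintro ⟨a, s, b⟩ -
    exact Stmt14.verticalCount_relabel hf a.1 b.1 s.1 s.2
  · -- InjOn
    rintro ⟨a, s, b⟩ - ⟨a', s', b'⟩ - heq
    simp only [] at heq
    set P := BrauerDiagram.relabel (a : Equiv.Perm (Fin n)) (b : Equiv.Perm (Fin n))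
      (brauerD n f hf (s : Equiv.Perm (Fin n)) s.2) with hPdef
    have hHP : (Stmt14.Htop P).card = 2 * f := Stmt14.card_Htop_relabel hf a.1 b.1 s.1 s.2
    have key : ∀ (x : Dfn n f)
        (z : {σ : Equiv.Perm (Fin n) // ∀ i : Fin n, (i : ℕ) < 2 * f → σ i = i})
        (y : Dfn n f),
        BrauerDiagram.relabel (x : Equiv.Perm (Fin n)) (y : Equiv.Perm (Fin n))
          (brauerD n f hf (z : Equiv.Perm (Fin n)) z.2) = P →
        (∀ j, (x : Equiv.Perm (Fin n)) j = Stmt14.aF hf P hHP j) ∧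
        (∀ j, (y : Equiv.Perm (Fin n)) j =
          Stmt14.aF hf (Stmt14.flip P) (Stmt14.hH_flip P hHP) j) := by
      intro x z y hxy
      constructor
      · apply Stmt14.eq_aF hf P hHP _ x.2
        · intro j k hj1 hj2 hk
          have hrel := Stmt14.relabel_brauerD_inl hf x.1 y.1 z.1 z.2 j
          rw [dif_pos hj2, hxy] at hrel
          refine ⟨by rw [Stmt14.mem_Htop, hrel]; rfl, ?_⟩
          show Stmt14.unify (P.m (.inl (x.1 j))) = x.1 k
          rw [hrel]
          show x.1 (partnerFin n f hf j hj2) = x.1 k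
          exact congrArg x.1 (Fin.ext (by simp only [partnerFin]; omega))
        · intro j hj
          have hrel := Stmt14.relabel_brauerD_inl hf x.1 y.1 z.1 z.2 j
          rw [dif_neg hj, hxy] at hrel
          rw [Stmt14.mem_Htop, hrel]
          simp
      · apply Stmt14.eq_aF hf (Stmt14.flip P) (Stmt14.hH_flip P hHP) _ y.2
        · intro j k hj1 hj2 hk
          have hrel := Stmt14.relabel_brauerD_inr hf x.1 y.1 z.1 z.2 j
          rw [dif_pos hj2, hxy] at hrel
          have hflip : (Stmt14.flip P).m (.inl (y.1 j)) =
              .inl (y.1 (partnerFin n f hf j hj2)) := by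
            rw [Stmt14.flip_m]
            simp only [Sum.swap_inl]
            rw [hrel]
            rfl
          refine ⟨by rw [Stmt14.mem_Htop, hflip]; rfl, ?_⟩
          show Stmt14.unify ((Stmt14.flip P).m (.inl (y.1 j))) = y.1 k
          rw [hflip]
          show y.1 (partnerFin n f hf j hj2) = y.1 k
          exact congrArg y.1 (Fin.ext (by simp only [partnerFin]; omega))
        · intro j hj
          have hrel := Stmt14.relabel_brauerD_inr hf x.1 y.1 z.1 z.2 j
          rw [dif_neg hj, hxy] at hrel
          rw [Stmt14.mem_Htop, Stmt14.flip_m]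
          simp only [Sum.swap_inl]
          rw [hrel]
          simp
    obtain ⟨ha, hb2⟩ := key a s b hPdef.symm
    obtain ⟨ha', hb2'⟩ := key a' s' b' heq.symm
    have haa : a = a' := Subtype.ext (Equiv.ext fun j => (ha j).trans (ha' j).symm)
    have hbb : b = b' := Subtype.ext (Equiv.ext fun j => (hb2 j).trans (hb2' j).symm)
    have hss : s = s' := by
      apply Subtype.ext
      apply Equiv.ext
      intro j
      by_cases hj : (j : ℕ) < 2 * f
      · rw [s.2 j hj, s'.2 j hj]
      · have e1 := Stmt14.relabel_brauerD_inl hf a.1 b.1 s.1 s.2 j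
        have e2 := Stmt14.relabel_brauerD_inl hf a'.1 b'.1 s'.1 s'.2 j
        rw [dif_neg hj, ← hPdef] at e1
        rw [dif_neg hj, ← heq, ← haa, ← hbb] at e2
        have h2 := e1.symm.trans e2
        have h3 : (b : Equiv.Perm (Fin n)) ((s : Equiv.Perm (Fin n)) j) =
            (b : Equiv.Perm (Fin n)) ((s' : Equiv.Perm (Fin n)) j) := by
          injection h2
        exact (b : Equiv.Perm (Fin n)).injective h3
    rw [haa, hss, hbb]
  · -- SurjOn
    intro D hD
    rw [Set.mem_setOf_eq] at hD
    have hH : (Stmt14.Htop D).card = 2 * f := by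
      have h1 := Stmt14.verticalCount_eq D
      have h2 := Finset.card_compl (Stmt14.Htop D)
      have h3 : (Stmt14.Htop D).card ≤ Fintype.card (Fin n) := Finset.card_le_univ _
      rw [Fintype.card_fin] at h2 h3
      omega
    exact ⟨⟨⟨Stmt14.aPerm hf D hH, Stmt14.aPerm_mem_Dfn⟩,
      ⟨Stmt14.sPerm hf D hH, Stmt14.sPerm_fix hf D hH⟩,
      ⟨Stmt14.aPerm hf (Stmt14.flip D) (Stmt14.hH_flip D hH), Stmt14.aPerm_mem_Dfn⟩⟩,
      Set.mem_univ _, Stmt14.surj_eq hf D hH⟩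

end
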